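/- Let p be an odd prime and D a discriminant form of type p^{εn} with n odd. Then the dimension of the space of SL_2(Z)-invariants of the Weil representation on C[D] equals (p^{n−1} − 1)/(p^2 − 1). -/

import Mathlib

open scoped Classical

/-- `e(x) = exp(2πix)`; it only depends on `x` modulo 1. -/
noncomputable def e (x : ℚ) : ℂ := Complex.exp (2 * Real.pi * Complex.I * (x : ℂ))

/-- A discriminant form structure on a finite abelian group `D`: a function
`q : D → ℚ` representing a quadratic form `D → ℚ/ℤ` (all identities hold modulo 1)
whose associated bilinear form `b(β,γ) = q(β+γ) - q(β) - q(γ) mod 1` is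
nondegenerate. -/
structure IsDiscForm (D : Type*) [AddCommGroup D] [Fintype D] (q : D → ℚ) : Prop where
  quad : ∀ (n : ℤ) (γ : D), ∃ k : ℤ, q (n • γ) - (n : ℚ) ^ 2 * q γ = (k : ℚ)
  bilin : ∀ α β γ : D, ∃ k : ℤ,
    (q (α + β + γ) - q (α + β) - q γ) - (q (α + γ) - q α - q γ)
      - (q (β + γ) - q β - q γ) = (k : ℚ)
  nondeg : ∀ γ : D, (∀ β : D, ∃ k : ℤ, q (γ + β) - q γ - q β = (k : ℚ)) → γ = 0

/-- The action of `T` in the Weil representation on `ℂ[D]`. -/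
noncomputable def rhoT (D : Type) [AddCommGroup D] [Fintype D] (q : D → ℚ) :
    (D → ℂ) →ₗ[ℂ] (D → ℂ) :=
  LinearMap.pi fun γ => e (-(q γ)) • LinearMap.proj γ

/-- The action of `S` in the Weil representation on `ℂ[D]`, where `σ = e(sign(D)/8)`. -/
noncomputable def rhoS (D : Type) [AddCommGroup D] [Fintype D] (q : D → ℚ) (σ : ℂ) :
    (D → ℂ) →ₗ[ℂ] (D → ℂ) :=
  LinearMap.pi fun γ =>
    ∑ β : D, ((σ / (Real.sqrt (Fintype.card D) : ℂ)) * e (q (γ + β) - q γ - q β)) •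
      LinearMap.proj β

/-- The subspace of `SL₂(ℤ)`-invariants of the Weil representation, i.e. the vectors
fixed by the generators `S` and `T` of `SL₂(ℤ)`. -/
noncomputable def weilInvariants (D : Type) [AddCommGroup D] [Fintype D]
    (q : D → ℚ) (σ : ℂ) : Submodule ℂ (D → ℂ) :=
  LinearMap.ker (rhoT D q - LinearMap.id) ⊓ LinearMap.ker (rhoS D q σ - LinearMap.id)

/-! ### Auxiliary development -/

section Basics

lemma e_add (x y : ℚ) : e (x + y) = e x * e y := by
  simp only [e, ← Complex.exp_add]; push_cast; ring_nf

lemma e_zero : e 0 = 1 := by simp [e]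

lemma e_int (k : ℤ) : e k = 1 := by
  simp only [e]
  rw [show 2 * (Real.pi : ℂ) * Complex.I * ((k : ℚ) : ℂ)
      = (k : ℤ) * (2 * Real.pi * Complex.I) by push_cast; ring]
  exact Complex.exp_int_mul_two_pi_mul_I k

lemma e_pow (x : ℚ) (m : ℕ) : e x ^ m = e (m * x) := by
  induction m with
  | zero => simp [e_zero]
  | succ k ih =>
    rw [pow_succ, ih, ← e_add]
    congr 1
    push_cast
    ring

lemma e_add_int (x : ℚ) (k : ℤ) : e (x + k) = e x := by
  rw [e_add, e_int, mul_one]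

variable (p : ℕ) [Fact p.Prime]

lemma p_ne_zero : (p : ℚ) ≠ 0 := by
  exact_mod_cast (Fact.out : p.Prime).ne_zero

lemma e_root : e (1 / p) ^ p = 1 := by
  rw [e_pow, mul_one_div, div_self (p_ne_zero p), show (1:ℚ) = ((1:ℤ):ℚ) by norm_num, e_int]

/-- The standard additive character of `ZMod p` with values in `ℂ`. -/
noncomputable def psi : AddChar (ZMod p) ℂ :=
  AddChar.zmodChar p (e_root p)

lemma psi_apply (x : ZMod p) : psi p x = e (x.val / p) := by
  rw [psi, AddChar.zmodChar_apply, e_pow, mul_one_div]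

lemma e_mod (m m' : ℤ) (h : (m : ZMod p) = (m' : ZMod p)) :
    e ((m : ℚ) / p) = e ((m' : ℚ) / p) := by
  have hd : (p : ℤ) ∣ m - m' := by
    rwa [ZMod.intCast_eq_intCast_iff, Int.modEq_iff_dvd, ← dvd_neg, neg_sub] at h
  obtain ⟨k, hk⟩ := hd
  have : (m : ℚ) / p = (m' : ℚ) / p + k := by
    have h2 : (m : ℚ) = m' + p * k := by exact_mod_cast congrArg (Int.cast : ℤ → ℚ) (by linarith)
    rw [h2, add_div, mul_div_cancel_left₀ _ (p_ne_zero p)]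
  rw [this, e_add_int]

lemma psi_int (m : ℤ) : psi p ((m : ZMod p)) = e ((m : ℚ) / p) := by
  rw [psi_apply]
  have h : ((((m : ZMod p).val : ℤ)) : ZMod p) = (m : ZMod p) := by
    push_cast
    exact ZMod.natCast_rightInverse _
  have h2 := e_mod p _ _ h
  rw [show ((((m : ZMod p).val : ℕ) : ℚ)) = (((m : ZMod p).val : ℤ) : ℚ) by push_cast; rfl]
  exact h2

lemma psi_ne_one_of_ne_zero {x : ZMod p} (hx : x ≠ 0) : psi p x ≠ 1 := by
  have hprime : IsPrimitiveRoot (e (1/p)) p := by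
    have := Complex.isPrimitiveRoot_exp p (Fact.out : p.Prime).ne_zero
    convert this using 2
    simp only [e]
    push_cast
    ring
  rw [psi, AddChar.zmodChar_apply]
  intro hcon
  have hvp : x.val < p := ZMod.val_lt x
  have := IsPrimitiveRoot.pow_inj hprime hvp (Nat.pos_of_ne_zero (Fact.out : p.Prime).ne_zero)
    (by simpa using hcon)
  exact hx (by rwa [← ZMod.val_eq_zero])

lemma psi_prim : (psi p).IsPrimitive := by
  apply AddChar.IsPrimitive.of_ne_one
  intro hcon
  have h1 : psi p 1 = 1 := by rw [hcon]; rfl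
  exact psi_ne_one_of_ne_zero p (one_ne_zero) h1

end Basics

section Forms

variable {p : ℕ} [Fact p.Prime] {n : ℕ}

/-- The quadratic form with values in `ZMod p`. -/
def Qm (a : Fin n → ℤ) (γ : Fin n → ZMod p) : ZMod p := ∑ i, (a i : ZMod p) * (γ i) ^ 2

/-- The bilinear form with values in `ZMod p`. -/
def Bm (a : Fin n → ℤ) (γ β : Fin n → ZMod p) : ZMod p := ∑ i, 2 * (a i : ZMod p) * γ i * β i

variable (a : Fin n → ℤ)

lemma Qm_zero : Qm a (0 : Fin n → ZMod p) = 0 := by simp [Qm]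

lemma Qm_add (γ β : Fin n → ZMod p) : Qm a (γ + β) = Qm a γ + Bm a γ β + Qm a β := by
  simp only [Qm, Bm, ← Finset.sum_add_distrib]
  exact Finset.sum_congr rfl fun i _ => by simp [Pi.add_apply]; ring

lemma Qm_smul (t : ZMod p) (γ : Fin n → ZMod p) : Qm a (t • γ) = t ^ 2 * Qm a γ := by
  simp only [Qm, Finset.mul_sum]
  exact Finset.sum_congr rfl fun i _ => by simp [Pi.smul_apply, smul_eq_mul]; ring

lemma Bm_symm (γ β : Fin n → ZMod p) : Bm a γ β = Bm a β γ := by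
  simp only [Bm]; exact Finset.sum_congr rfl fun i _ => by ring

lemma Bm_smul_right (t : ZMod p) (γ β : Fin n → ZMod p) : Bm a γ (t • β) = t * Bm a γ β := by
  simp only [Bm, Finset.mul_sum]
  exact Finset.sum_congr rfl fun i _ => by simp [Pi.smul_apply, smul_eq_mul]; ring

lemma Bm_add_right (γ β δ : Fin n → ZMod p) : Bm a γ (β + δ) = Bm a γ β + Bm a γ δ := by
  simp only [Bm, ← Finset.sum_add_distrib]
  exact Finset.sum_congr rfl fun i _ => by simp [Pi.add_apply]; ring

lemma Bm_zero_right (γ : Fin n → ZMod p) : Bm a γ 0 = 0 := by simp [Bm]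

lemma Bm_self (γ : Fin n → ZMod p) : Bm a γ γ = 2 * Qm a γ := by
  simp only [Bm, Qm, Finset.mul_sum]
  exact Finset.sum_congr rfl fun i _ => by ring

end Forms

section Interface

variable {p : ℕ} [Fact p.Prime] {n : ℕ} (a : Fin n → ℤ)
variable {q : (Fin n → ZMod p) → ℚ}
variable (hq : ∀ x, q x = ((∑ i, a i * ((x i).val : ℤ) ^ 2 : ℤ) : ℚ) / (p : ℚ))

include hq

lemma e_q_eq (γ : Fin n → ZMod p) : e (q γ) = psi p (Qm a γ) := by
  rw [hq]
  have : Qm a γ = (((∑ i, a i * ((γ i).val : ℤ) ^ 2 : ℤ)) : ZMod p) := by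
    push_cast
    refine Finset.sum_congr rfl fun i _ => ?_
    rw [ZMod.natCast_val, ZMod.cast_id]
  rw [this, psi_int]

lemma e_negq_eq (γ : Fin n → ZMod p) : e (-(q γ)) = psi p (-(Qm a γ)) := by
  rw [hq]
  have h1 : -(((∑ i, a i * ((γ i).val : ℤ) ^ 2 : ℤ) : ℚ) / (p : ℚ))
      = (((-(∑ i, a i * ((γ i).val : ℤ) ^ 2) : ℤ) : ℚ)) / (p : ℚ) := by push_cast; ring
  have h2 : -(Qm a γ) = (((-(∑ i, a i * ((γ i).val : ℤ) ^ 2) : ℤ)) : ZMod p) := by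
    push_cast
    congr 1
    refine Finset.sum_congr rfl fun i _ => ?_
    rw [ZMod.natCast_val, ZMod.cast_id]
  rw [h1, h2, psi_int]

lemma e_b_eq (γ β : Fin n → ZMod p) :
    e (q (γ + β) - q γ - q β) = psi p (Bm a γ β) := by
  rw [hq, hq, hq]
  set M1 : ℤ := ∑ i, a i * (((γ + β) i).val : ℤ) ^ 2
  set M2 : ℤ := ∑ i, a i * ((γ i).val : ℤ) ^ 2
  set M3 : ℤ := ∑ i, a i * ((β i).val : ℤ) ^ 2
  have h1 : (M1 : ℚ) / p - (M2 : ℚ) / p - (M3 : ℚ) / p = ((M1 - M2 - M3 : ℤ) : ℚ) / p := by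
    push_cast; ring
  have hM : ∀ (δ : Fin n → ZMod p) (M : ℤ), M = ∑ i, a i * ((δ i).val : ℤ) ^ 2 →
      ((M : ZMod p)) = Qm a δ := by
    intro δ M hMdef
    rw [hMdef]; push_cast
    refine Finset.sum_congr rfl fun i _ => ?_
    rw [ZMod.natCast_val, ZMod.cast_id]
  have h2 : ((M1 - M2 - M3 : ℤ) : ZMod p) = Bm a γ β := by
    push_cast
    rw [hM (γ + β) M1 rfl, hM γ M2 rfl, hM β M3 rfl, Qm_add]
    ring
  rw [h1, ← h2, psi_int]

end Interface

section QuadChar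

variable (p : ℕ) [Fact p.Prime]

/-- The quadratic character of `ZMod p` with values in `ℂ`. -/
noncomputable def chi2 : MulChar (ZMod p) ℂ :=
  (quadraticChar (ZMod p)).ringHomComp (Int.castRingHom ℂ)

lemma ringChar_ne_two (hp : p ≠ 2) : ringChar (ZMod p) ≠ 2 := by
  rw [ZMod.ringChar_zmod_n]; exact hp

lemma chi2_zero : chi2 p 0 = 0 := by
  simp [chi2, MulChar.ringHomComp]

lemma chi2_apply (x : ZMod p) : chi2 p x = ((quadraticChar (ZMod p) x : ℤ) : ℂ) := rfl

lemma chi2_mul (x y : ZMod p) : chi2 p (x * y) = chi2 p x * chi2 p y := by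
  simp [map_mul]

lemma chi2_dichotomy {x : ZMod p} (hx : x ≠ 0) : chi2 p x = 1 ∨ chi2 p x = -1 := by
  rcases quadraticChar_dichotomy hx with h | h <;> [left; right] <;>
    rw [chi2_apply, h] <;> norm_num

lemma chi2_sq {x : ZMod p} (hx : x ≠ 0) : chi2 p x * chi2 p x = 1 := by
  rcases chi2_dichotomy p hx with h | h <;> rw [h] <;> norm_num

lemma chi2_pow_odd {n : ℕ} (hn : Odd n) {x : ZMod p} (hx : x ≠ 0) :
    chi2 p x ^ n = chi2 p x := by
  rcases chi2_dichotomy p hx with h | h <;> rw [h]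
  · rw [one_pow]
  · rw [hn.neg_one_pow]

lemma chi2_sum_zero (hp : p ≠ 2) : ∑ x : ZMod p, chi2 p x = 0 := by
  have h := quadraticChar_sum_zero (ringChar_ne_two p hp)
  calc ∑ x : ZMod p, chi2 p x = ((∑ x : ZMod p, quadraticChar (ZMod p) x : ℤ) : ℂ) := by
        push_cast [chi2_apply]; rfl
    _ = 0 := by rw [h]; norm_num

lemma chi2_ne_one (hp : p ≠ 2) : chi2 p ≠ 1 := by
  rw [chi2, MulChar.ringHomComp_ne_one_iff
    (fun x y hxy => by simpa using hxy : Function.Injective (Int.castRingHom ℂ))]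
  exact quadraticChar_ne_one (ringChar_ne_two p hp)

lemma chi2_quadratic : (chi2 p).IsQuadratic :=
  (quadraticChar_isQuadratic (ZMod p)).comp _

/-- The Gauss sum. -/
noncomputable def gS : ℂ := gaussSum (chi2 p) (psi p)

lemma gS_sq (hp : p ≠ 2) : gS p ^ 2 = chi2 p (-1) * p := by
  have := gaussSum_sq (chi2_ne_one p hp) (chi2_quadratic p) (psi_prim p)
  rwa [ZMod.card p] at this

lemma pne2_two_ne_zero (hp : p ≠ 2) : (2 : ZMod p) ≠ 0 := by
  intro h
  have h2 : (p : ℕ) ∣ 2 := (ZMod.natCast_eq_zero_iff 2 p).mp (by exact_mod_cast h)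
  have hle := Nat.le_of_dvd (by norm_num) h2
  have hge := (Fact.out : p.Prime).two_le
  omega

lemma pne2_four_ne_zero (hp : p ≠ 2) : (4 : ZMod p) ≠ 0 := by
  have h2 := pne2_two_ne_zero p hp
  intro h
  have h4 : (2 : ZMod p) * 2 = 0 := by
    rw [show (2 : ZMod p) * 2 = 4 by norm_num, h]
  rcases mul_eq_zero.mp h4 with h' | h' <;> exact h2 h'

/-- Fiber-counting: sum of `f (d ^ 2)`. -/
lemma sum_sq_eq (hp : p ≠ 2) (f : ZMod p → ℂ) :
    ∑ d : ZMod p, f (d ^ 2) = ∑ u : ZMod p, (chi2 p u + 1) * f u := by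
  classical
  rw [← Finset.sum_fiberwise Finset.univ (fun d : ZMod p => d ^ 2) (fun d => f (d ^ 2))]
  refine Finset.sum_congr rfl fun u _ => ?_
  have hcard : ((Finset.univ.filter fun d : ZMod p => d ^ 2 = u).card : ℂ)
      = chi2 p u + 1 := by
    have h := quadraticChar_card_sqrts (ringChar_ne_two p hp) u
    have hset : {x : ZMod p | x ^ 2 = u}.toFinset
        = Finset.univ.filter fun d : ZMod p => d ^ 2 = u := by
      ext x; simp
    rw [hset] at h
    rw [chi2_apply]
    exact_mod_cast congrArg (Int.cast : ℤ → ℂ) h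
  calc ∑ d ∈ Finset.univ.filter fun d : ZMod p => d ^ 2 = u, f (d ^ 2)
      = ∑ d ∈ Finset.univ.filter fun d : ZMod p => d ^ 2 = u, f u := by
        refine Finset.sum_congr rfl fun d hd => ?_
        rw [(Finset.mem_filter.mp hd).2]
    _ = ((Finset.univ.filter fun d : ZMod p => d ^ 2 = u).card : ℂ) * f u := by
        rw [Finset.sum_const, nsmul_eq_mul]
    _ = (chi2 p u + 1) * f u := by rw [hcard]

lemma sum_psi_quad (hp : p ≠ 2) {b : ZMod p} (hb : b ≠ 0) :
    ∑ d : ZMod p, psi p (b * d ^ 2) = chi2 p b * gS p := by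
  have step1 : ∑ d : ZMod p, psi p (b * d ^ 2)
      = ∑ u : ZMod p, (chi2 p u + 1) * psi p (b * u) :=
    sum_sq_eq p hp fun u => psi p (b * u)
  rw [step1]
  have h1 : ∑ u : ZMod p, (chi2 p u + 1) * psi p (b * u)
      = (∑ u : ZMod p, chi2 p u * psi p (b * u)) + ∑ u : ZMod p, psi p (b * u) := by
    rw [← Finset.sum_add_distrib]
    exact Finset.sum_congr rfl fun u _ => by ring
  rw [h1]
  have h2 : ∑ u : ZMod p, psi p (b * u) = 0 := by
    have h := AddChar.sum_mulShift b (psi_prim p)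
    simp only [if_neg hb] at h
    calc ∑ u : ZMod p, psi p (b * u) = ∑ u : ZMod p, psi p (u * b) :=
          Finset.sum_congr rfl fun u _ => by rw [mul_comm]
      _ = 0 := by exact_mod_cast h
  rw [h2, add_zero]
  have h3 : ∑ u : ZMod p, chi2 p u * psi p (b * u)
      = gaussSum (chi2 p) ((psi p).mulShift b) := by
    simp [gaussSum, AddChar.mulShift_apply]
  rw [h3]
  have hbu : IsUnit b := isUnit_iff_ne_zero.mpr hb
  have h4 := gaussSum_mulShift (chi2 p) (psi p) hbu.unit
  rw [hbu.unit_spec] at h4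
  have h6 : chi2 p b * (chi2 p b * gaussSum (chi2 p) ((psi p).mulShift b))
      = chi2 p b * gaussSum (chi2 p) (psi p) := by rw [h4]
  rw [← mul_assoc, chi2_sq p hb, one_mul] at h6
  rw [h6]; rfl

/-- Completing the square. -/
lemma sum_psi_quad_lin (hp : p ≠ 2) {b : ZMod p} (hb : b ≠ 0) (c : ZMod p) :
    ∑ d : ZMod p, psi p (b * d ^ 2 + c * d)
      = psi p (-(c ^ 2) * (4 * b)⁻¹) * (chi2 p b * gS p) := by
  have h2 : (2 : ZMod p) ≠ 0 := pne2_two_ne_zero p hp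
  have h4 : (4 : ZMod p) ≠ 0 := pne2_four_ne_zero p hp
  have h2b : (2 : ZMod p) * b ≠ 0 := mul_ne_zero h2 hb
  have h4b : (4 : ZMod p) * b ≠ 0 := mul_ne_zero h4 hb
  set t : ZMod p := c * (2 * b)⁻¹ with ht
  have h2bt : 2 * b * t = c := by
    rw [ht, mul_comm c _, ← mul_assoc, mul_inv_cancel₀ h2b, one_mul]
  have hbt2 : b * t ^ 2 - c * t = -(c ^ 2) * (4 * b)⁻¹ := by
    rw [ht]
    field_simp
    ring
  have key : ∀ d : ZMod p, b * (d - t) ^ 2 + c * (d - t) = b * d ^ 2 + -(c ^ 2) * (4 * b)⁻¹ := by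
    intro d
    have expand : b * (d - t) ^ 2 + c * (d - t)
        = b * d ^ 2 + (c - 2 * b * t) * d + (b * t ^ 2 - c * t) := by ring
    rw [expand, h2bt, sub_self, zero_mul, add_zero, hbt2]
  calc ∑ d : ZMod p, psi p (b * d ^ 2 + c * d)
      = ∑ d : ZMod p, psi p (b * (d - t) ^ 2 + c * (d - t)) := by
        refine Fintype.sum_equiv (Equiv.addRight t) _ _ fun d => ?_
        simp only [Equiv.coe_addRight, add_sub_cancel_right]
    _ = ∑ d : ZMod p, psi p (b * d ^ 2) * psi p (-(c ^ 2) * (4 * b)⁻¹) := by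
        refine Finset.sum_congr rfl fun d _ => ?_
        rw [key d, AddChar.map_add_eq_mul]
    _ = psi p (-(c ^ 2) * (4 * b)⁻¹) * (chi2 p b * gS p) := by
        rw [← Finset.sum_mul, sum_psi_quad p hp hb, mul_comm]

end QuadChar

section VectorGauss

variable {p : ℕ} [Fact p.Prime] {n : ℕ}

lemma psi_sum {ι : Type*} (s : Finset ι) (f : ι → ZMod p) :
    psi p (∑ i ∈ s, f i) = ∏ i ∈ s, psi p (f i) := by
  classical
  induction s using Finset.induction_on with
  | empty => simp
  | insert _ _ h ih => rw [Finset.sum_insert h, Finset.prod_insert h, AddChar.map_add_eq_mul, ih]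

/-- Summing a per-coordinate character expression over all vectors. -/
lemma sum_pi_prod (f : Fin n → ZMod p → ℂ) :
    ∑ δ : Fin n → ZMod p, ∏ i, f i (δ i) = ∏ i, ∑ d : ZMod p, f i d := by
  classical
  rw [Finset.prod_univ_sum]
  rw [Fintype.piFinset_univ]

variable (a : Fin n → ℤ) (hp : p ≠ 2) (ha : ∀ i, ((a i : ZMod p)) ≠ 0)

/-- The sum `∑ ψ(w Q(δ) + B(δ,α))` splits into coordinates. -/
lemma sum_wQB_split (w : ZMod p) (α : Fin n → ZMod p) :
    ∑ δ : Fin n → ZMod p, psi p (w * Qm a δ + Bm a δ α)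
      = ∏ i, ∑ d : ZMod p, psi p ((w * (a i : ZMod p)) * d ^ 2 + (2 * (a i : ZMod p) * α i) * d) := by
  have hsplit : ∀ δ : Fin n → ZMod p, w * Qm a δ + Bm a δ α
      = ∑ i, ((w * (a i : ZMod p)) * (δ i) ^ 2 + (2 * (a i : ZMod p) * α i) * (δ i)) := by
    intro δ
    simp only [Qm, Bm, Finset.mul_sum, ← Finset.sum_add_distrib]
    exact Finset.sum_congr rfl fun i _ => by ring
  have step1 : ∑ δ : Fin n → ZMod p, psi p (w * Qm a δ + Bm a δ α)
      = ∑ δ : Fin n → ZMod p, ∏ i, (fun i d => psi p ((w * (a i : ZMod p)) * d ^ 2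
          + (2 * (a i : ZMod p) * α i) * d)) i (δ i) := by
    refine Finset.sum_congr rfl fun δ _ => ?_
    rw [hsplit δ, psi_sum]
  rw [step1]
  exact sum_pi_prod (fun i d => psi p ((w * (a i : ZMod p)) * d ^ 2
    + (2 * (a i : ZMod p) * α i) * d))

include hp ha

/-- Main vector Gauss sum computation. -/
lemma sum_wQB (w : ZMod p) (hw : w ≠ 0) (α : Fin n → ZMod p) :
    ∑ δ : Fin n → ZMod p, psi p (w * Qm a δ + Bm a δ α)
      = psi p (-w⁻¹ * Qm a α) * ∏ i, (chi2 p (w * (a i : ZMod p)) * gS p) := by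
  rw [sum_wQB_split]
  have hcoord : ∀ i, ∑ d : ZMod p, psi p ((w * (a i : ZMod p)) * d ^ 2
        + (2 * (a i : ZMod p) * α i) * d)
      = psi p (-w⁻¹ * ((a i : ZMod p) * (α i) ^ 2))
        * (chi2 p (w * (a i : ZMod p)) * gS p) := by
    intro i
    have hb : w * (a i : ZMod p) ≠ 0 := mul_ne_zero hw (ha i)
    rw [sum_psi_quad_lin p hp hb]
    congr 2
    have h4 : (4 : ZMod p) ≠ 0 := pne2_four_ne_zero p hp
    field_simp
    ring
  calc ∏ i, ∑ d : ZMod p, psi p ((w * (a i : ZMod p)) * d ^ 2 + (2 * (a i : ZMod p) * α i) * d)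
      = ∏ i, (psi p (-w⁻¹ * ((a i : ZMod p) * (α i) ^ 2))
          * (chi2 p (w * (a i : ZMod p)) * gS p)) := Finset.prod_congr rfl fun i _ => hcoord i
    _ = (∏ i, psi p (-w⁻¹ * ((a i : ZMod p) * (α i) ^ 2)))
          * ∏ i, (chi2 p (w * (a i : ZMod p)) * gS p) := Finset.prod_mul_distrib
    _ = psi p (-w⁻¹ * Qm a α) * ∏ i, (chi2 p (w * (a i : ZMod p)) * gS p) := by
        congr 1
        rw [← psi_sum]
        congr 1
        rw [Qm, Finset.mul_sum]

lemma sum_wQ (w : ZMod p) (hw : w ≠ 0) :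
    ∑ δ : Fin n → ZMod p, psi p (w * Qm a δ)
      = ∏ i, (chi2 p (w * (a i : ZMod p)) * gS p) := by
  have h := sum_wQB a hp ha w hw 0
  rw [Qm_zero, mul_zero, AddChar.map_zero_eq_one, one_mul] at h
  rw [← h]
  refine Finset.sum_congr rfl fun δ _ => ?_
  rw [Bm_zero_right, add_zero]

omit hp ha

/-- Orthogonality: `∑ ψ(B(δ,α)) = pⁿ` or `0`. -/
lemma sum_B (hp : p ≠ 2) (ha : ∀ i, ((a i : ZMod p)) ≠ 0) (α : Fin n → ZMod p) :
    ∑ δ : Fin n → ZMod p, psi p (Bm a δ α)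
      = if α = 0 then ((p : ℂ)) ^ n else 0 := by
  have h := sum_wQB_split a 0 α
  simp only [zero_mul, zero_add] at h
  rw [h]
  have hcoord : ∀ i, ∑ d : ZMod p, psi p ((2 * (a i : ZMod p) * α i) * d)
      = if α i = 0 then (p : ℂ) else 0 := by
    intro i
    have h2 : (2 : ZMod p) ≠ 0 := pne2_two_ne_zero p hp
    have hmul := AddChar.sum_mulShift (2 * (a i : ZMod p) * α i) (psi_prim p)
    have hcond : (2 * (a i : ZMod p) * α i = 0) ↔ α i = 0 := by
      constructor
      · intro hcon
        rcases mul_eq_zero.mp hcon with h' | h'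
        · exact absurd h' (mul_ne_zero h2 (ha i))
        · exact h'
      · intro h'; rw [h', mul_zero]
    calc ∑ d : ZMod p, psi p ((2 * (a i : ZMod p) * α i) * d)
        = ∑ d : ZMod p, psi p (d * (2 * (a i : ZMod p) * α i)) :=
          Finset.sum_congr rfl fun d _ => by rw [mul_comm]
      _ = if (2 * (a i : ZMod p) * α i) = 0 then ((Fintype.card (ZMod p) : ℂ)) else 0 := by
          exact_mod_cast hmul
      _ = if α i = 0 then (p : ℂ) else 0 := by
          rw [ZMod.card]
          by_cases hai : α i = 0
          · rw [if_pos (hcond.mpr hai), if_pos hai]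
          · rw [if_neg (fun hc => hai (hcond.mp hc)), if_neg hai]
  rw [Finset.prod_congr rfl fun i _ => hcoord i]
  by_cases hα : α = 0
  · subst hα
    simp
  · have : ∃ i, α i ≠ 0 := by
      by_contra hcon
      push_neg at hcon
      exact hα (funext hcon)
    obtain ⟨i, hi⟩ := this
    rw [if_neg hα]
    exact Finset.prod_eq_zero (Finset.mem_univ i) (by rw [if_neg hi])

end VectorGauss

section Sigma

variable {p : ℕ} [Fact p.Prime] {n : ℕ}

/-- `√|D|` as a complex number. -/
noncomputable def Rc (p n : ℕ) [NeZero p] : ℂ := ((Real.sqrt (Fintype.card (Fin n → ZMod p)) : ℝ) : ℂ)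

lemma card_V : (Fintype.card (Fin n → ZMod p)) = p ^ n := by
  simp [ZMod.card]

lemma Rc_sq : Rc p n ^ 2 = (p : ℂ) ^ n := by
  rw [Rc, ← Complex.ofReal_pow, Real.sq_sqrt (by positivity : (0:ℝ) ≤ (Fintype.card (Fin n → ZMod p) : ℝ))]
  rw [card_V]
  push_cast
  rfl

lemma pn_ne_zero : ((p : ℂ)) ^ n ≠ 0 := by
  have : (p : ℂ) ≠ 0 := by
    exact_mod_cast fun h => (Fact.out : p.Prime).ne_zero (by exact_mod_cast h)
  exact pow_ne_zero n this

lemma Rc_ne_zero : Rc p n ≠ 0 := by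
  intro h
  have := Rc_sq (p := p) (n := n)
  rw [h] at this
  exact pn_ne_zero (p := p) (n := n) (by rw [← this]; ring)

variable (a : Fin n → ℤ) {σ : ℂ} {q : (Fin n → ZMod p) → ℚ}
variable (hp : p ≠ 2) (ha : ∀ i, ((a i : ZMod p)) ≠ 0) (hn : Odd n)
variable (hq : ∀ x, q x = ((∑ i, a i * ((x i).val : ℤ) ^ 2 : ℤ) : ℚ) / (p : ℚ))
variable (hMilgram : ∑ γ : Fin n → ZMod p, e (q γ)
      = (Real.sqrt (Fintype.card (Fin n → ZMod p)) : ℂ) * σ)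

include hp ha hq hMilgram

lemma prod_chi_g : ∏ i, (chi2 p ((a i : ZMod p)) * gS p) = Rc p n * σ := by
  have h1 : ∑ γ : Fin n → ZMod p, e (q γ) = ∑ γ : Fin n → ZMod p, psi p (Qm a γ) :=
    Finset.sum_congr rfl fun γ _ => e_q_eq a hq γ
  have h2 : ∑ γ : Fin n → ZMod p, psi p (Qm a γ)
      = ∏ i, (chi2 p ((1 : ZMod p) * (a i : ZMod p)) * gS p) := by
    have := sum_wQ a hp ha 1 one_ne_zero
    rw [← this]
    exact Finset.sum_congr rfl fun δ _ => by rw [one_mul]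
  have h3 : ∏ i, (chi2 p ((1 : ZMod p) * (a i : ZMod p)) * gS p)
      = ∏ i, (chi2 p ((a i : ZMod p)) * gS p) :=
    Finset.prod_congr rfl fun i _ => by rw [one_mul]
  rw [← h3, ← h2, ← h1, hMilgram, Rc]

include hn

lemma sum_wQ_sigma (w : ZMod p) (hw : w ≠ 0) :
    ∑ δ : Fin n → ZMod p, psi p (w * Qm a δ) = chi2 p w * (Rc p n * σ) := by
  rw [sum_wQ a hp ha w hw]
  calc ∏ i, (chi2 p (w * (a i : ZMod p)) * gS p)
      = ∏ i, (chi2 p w * (chi2 p ((a i : ZMod p)) * gS p)) := by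
        refine Finset.prod_congr rfl fun i _ => ?_
        rw [chi2_mul]; ring
    _ = (chi2 p w) ^ n * ∏ i, (chi2 p ((a i : ZMod p)) * gS p) := by
        rw [Finset.prod_mul_distrib, Finset.prod_const, Finset.card_univ, Fintype.card_fin]
    _ = chi2 p w * (Rc p n * σ) := by
        rw [chi2_pow_odd p hn hw, prod_chi_g a hp ha hq hMilgram]

lemma sum_wQB_sigma (w : ZMod p) (hw : w ≠ 0) (α : Fin n → ZMod p) :
    ∑ δ : Fin n → ZMod p, psi p (w * Qm a δ + Bm a δ α)
      = psi p (-w⁻¹ * Qm a α) * (chi2 p w * (Rc p n * σ)) := by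
  rw [sum_wQB a hp ha w hw α]
  congr 1
  calc ∏ i, (chi2 p (w * (a i : ZMod p)) * gS p)
      = ∏ i, (chi2 p w * (chi2 p ((a i : ZMod p)) * gS p)) := by
        refine Finset.prod_congr rfl fun i _ => ?_
        rw [chi2_mul]; ring
    _ = (chi2 p w) ^ n * ∏ i, (chi2 p ((a i : ZMod p)) * gS p) := by
        rw [Finset.prod_mul_distrib, Finset.prod_const, Finset.card_univ, Fintype.card_fin]
    _ = chi2 p w * (Rc p n * σ) := by
        rw [chi2_pow_odd p hn hw, prod_chi_g a hp ha hq hMilgram]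

lemma sigma_sq : σ ^ 2 = chi2 p (-1) := by
  have hneg : (-1 : ZMod p) ≠ 0 := by
    intro h
    have : (1 : ZMod p) = 0 := by rw [← neg_neg (1 : ZMod p), h, neg_zero]
    exact one_ne_zero this
  have h1 : (Rc p n * σ) ^ 2 = (∏ i, (chi2 p ((a i : ZMod p)) * gS p)) ^ 2 := by
    rw [prod_chi_g a hp ha hq hMilgram]
  have h2 : (∏ i, (chi2 p ((a i : ZMod p)) * gS p)) ^ 2 = chi2 p (-1) * (p : ℂ) ^ n := by
    rw [← Finset.prod_pow]
    calc ∏ i, (chi2 p ((a i : ZMod p)) * gS p) ^ 2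
        = ∏ i, ((chi2 p ((a i : ZMod p)) * chi2 p ((a i : ZMod p))) * gS p ^ 2) :=
          Finset.prod_congr rfl fun i _ => by ring
      _ = ∏ i, ((chi2 p (-1) * (p : ℂ))) := by
          refine Finset.prod_congr rfl fun i _ => ?_
          rw [chi2_sq p (ha i), one_mul, gS_sq p hp]
      _ = (chi2 p (-1)) ^ n * (p : ℂ) ^ n := by
          rw [Finset.prod_const, Finset.card_univ, Fintype.card_fin, mul_pow]
      _ = chi2 p (-1) * (p : ℂ) ^ n := by rw [chi2_pow_odd p hn hneg]
  have h3 : (p : ℂ) ^ n * σ ^ 2 = chi2 p (-1) * (p : ℂ) ^ n := by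
    have h3' : Rc p n ^ 2 * σ ^ 2 = chi2 p (-1) * (p : ℂ) ^ n := by
      rw [show Rc p n ^ 2 * σ ^ 2 = (Rc p n * σ) ^ 2 by ring, h1, h2]
    rwa [Rc_sq] at h3'
  exact mul_left_cancel₀ (pn_ne_zero (p := p) (n := n)) (h3.trans (by ring))

end Sigma

section Operators

variable (p : ℕ) [Fact p.Prime] (n : ℕ) (a : Fin n → ℤ) (σ : ℂ)

/-- Matrix of `ρ(T)`. -/
noncomputable def MT : Matrix (Fin n → ZMod p) (Fin n → ZMod p) ℂ :=
  Matrix.of fun γ β => psi p (-(Qm a γ)) * (if β = γ then 1 else 0)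

/-- Matrix of `ρ(S)`. -/
noncomputable def MS : Matrix (Fin n → ZMod p) (Fin n → ZMod p) ℂ :=
  Matrix.of fun γ β => σ / Rc p n * psi p (Bm a γ β)

/-- Matrices of the Borel part (`c = 0` cell). -/
noncomputable def MA (t u : ZMod p) : Matrix (Fin n → ZMod p) (Fin n → ZMod p) ℂ :=
  Matrix.of fun γ β => chi2 p t * psi p (-u * Qm a γ) * (if β = t • γ then 1 else 0)

/-- Matrices of the big cell (`c ≠ 0`). -/
noncomputable def MO (x c y : ZMod p) : Matrix (Fin n → ZMod p) (Fin n → ZMod p) ℂ :=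
  Matrix.of fun γ β =>
    chi2 p c * σ / Rc p n * psi p (-x * Qm a γ + c⁻¹ * Bm a γ β - y * Qm a β)

lemma MA_zero (t u : ZMod p) (ht : t = 0) : MA p n a t u = 0 := by
  subst ht
  ext γ β
  simp [MA, chi2_zero]

lemma MO_zero (x c y : ZMod p) (hc : c = 0) : MO p n a σ x c y = 0 := by
  subst hc
  ext γ β
  simp [MO, chi2_zero]

variable {q : (Fin n → ZMod p) → ℚ}

lemma toLin_MT (hq : ∀ x, q x = ((∑ i, a i * ((x i).val : ℤ) ^ 2 : ℤ) : ℚ) / (p : ℚ)) :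
    Matrix.toLin' (MT p n a) = rhoT (Fin n → ZMod p) q := by
  apply LinearMap.ext; intro f
  funext γ
  have hrho : rhoT (Fin n → ZMod p) q f γ = e (-(q γ)) * f γ := by
    simp [rhoT, LinearMap.pi_apply]
  rw [hrho, Matrix.toLin'_apply, e_negq_eq a hq]
  show ∑ β, MT p n a γ β * f β = psi p (-(Qm a γ)) * f γ
  rw [Finset.sum_eq_single γ]
  · simp [MT]
  · intro β _ hβ
    simp [MT, if_neg hβ]
  · intro h; exact absurd (Finset.mem_univ γ) h

lemma toLin_MS (hq : ∀ x, q x = ((∑ i, a i * ((x i).val : ℤ) ^ 2 : ℤ) : ℚ) / (p : ℚ)) :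
    Matrix.toLin' (MS p n a σ) = rhoS (Fin n → ZMod p) q σ := by
  apply LinearMap.ext; intro f
  funext γ
  have hrho : rhoS (Fin n → ZMod p) q σ f γ
      = ∑ β, (σ / (Real.sqrt (Fintype.card (Fin n → ZMod p)) : ℂ)
          * e (q (γ + β) - q γ - q β)) * f β := by
    simp [rhoS, LinearMap.pi_apply]
  rw [hrho, Matrix.toLin'_apply]
  show ∑ β, MS p n a σ γ β * f β = _
  refine Finset.sum_congr rfl fun β _ => ?_
  rw [e_b_eq a hq]
  rfl

/-- Multiplication by the diagonal matrix `MT`. -/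
lemma MT_mul (M : Matrix (Fin n → ZMod p) (Fin n → ZMod p) ℂ) :
    MT p n a * M = Matrix.of fun γ β => psi p (-(Qm a γ)) * M γ β := by
  ext γ β
  rw [Matrix.mul_apply]
  rw [Finset.sum_eq_single γ]
  · simp [MT]
  · intro δ _ hδ
    simp [MT, if_neg hδ]
  · intro h; exact absurd (Finset.mem_univ γ) h

lemma I1 (t u : ZMod p) : MT p n a * MA p n a t u = MA p n a t (u + 1) := by
  rw [MT_mul]
  ext γ β
  show psi p (-(Qm a γ)) * (chi2 p t * psi p (-u * Qm a γ) * _) = _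
  rw [MA]
  show _ = chi2 p t * psi p (-(u+1) * Qm a γ) * _
  have : psi p (-(u + 1) * Qm a γ) = psi p (-u * Qm a γ) * psi p (-(Qm a γ)) := by
    rw [← AddChar.map_add_eq_mul]
    congr 1
    ring
  rw [this]
  ring

lemma I2 (x c y : ZMod p) : MT p n a * MO p n a σ x c y = MO p n a σ (x + 1) c y := by
  rw [MT_mul]
  ext γ β
  show psi p (-(Qm a γ)) * (chi2 p c * σ / Rc p n * psi p _) = chi2 p c * σ / Rc p n * psi p _
  have : psi p (-(x + 1) * Qm a γ + c⁻¹ * Bm a γ β - y * Qm a β)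
      = psi p (-x * Qm a γ + c⁻¹ * Bm a γ β - y * Qm a β) * psi p (-(Qm a γ)) := by
    rw [← AddChar.map_add_eq_mul]
    congr 1
    ring
  rw [this]
  ring

lemma I3 (t u : ZMod p) :
    MS p n a σ * MA p n a t u = MO p n a σ 0 t (u * (t⁻¹) ^ 2) := by
  by_cases ht : t = 0
  · subst ht
    rw [MA_zero p n a 0 u rfl, MO_zero p n a σ _ 0 _ rfl, Matrix.mul_zero]
  · ext γ β
    rw [Matrix.mul_apply]
    rw [Finset.sum_eq_single (t⁻¹ • β)]
    · show σ / Rc p n * psi p (Bm a γ (t⁻¹ • β)) * (chi2 p t * psi p (-u * Qm a (t⁻¹ • β)) * _) = _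
      rw [if_pos (by rw [smul_smul, mul_inv_cancel₀ ht, one_smul])]
      rw [MO]
      show _ = chi2 p t * σ / Rc p n * psi p (-0 * Qm a γ + t⁻¹ * Bm a γ β - u * (t⁻¹) ^ 2 * Qm a β)
      rw [Bm_smul_right, Qm_smul]
      have : psi p (-0 * Qm a γ + t⁻¹ * Bm a γ β - u * (t⁻¹) ^ 2 * Qm a β)
          = psi p (t⁻¹ * Bm a γ β) * psi p (-u * ((t⁻¹) ^ 2 * Qm a β)) := by
        rw [← AddChar.map_add_eq_mul]
        congr 1
        ring
      rw [this]
      ring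
    · intro δ _ hδ
      have : β ≠ t • δ := by
        intro hcon
        exact hδ (by rw [hcon, smul_smul, inv_mul_cancel₀ ht, one_smul])
      show _ * (_ * _ * _) = (0 : ℂ)
      rw [if_neg this]
      ring
    · intro h; exact absurd (Finset.mem_univ _) h

end Operators

section HardIdentities

variable {p : ℕ} [Fact p.Prime] {n : ℕ} {a : Fin n → ℤ} {σ : ℂ}
variable {q : (Fin n → ZMod p) → ℚ}
variable (hp : p ≠ 2) (ha : ∀ i, ((a i : ZMod p)) ≠ 0) (hn : Odd n)
variable (hq : ∀ x, q x = ((∑ i, a i * ((x i).val : ℤ) ^ 2 : ℤ) : ℚ) / (p : ℚ))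
variable (hMilgram : ∑ γ : Fin n → ZMod p, e (q γ)
      = (Real.sqrt (Fintype.card (Fin n → ZMod p)) : ℂ) * σ)

include hp ha hn hq hMilgram

lemma I4 (c y : ZMod p) :
    MS p n a σ * MO p n a σ 0 c y = MA p n a (-c) (y * c ^ 2) := by
  by_cases hc : c = 0
  · subst hc
    rw [MO_zero p n a σ _ 0 _ rfl, Matrix.mul_zero, MA_zero p n a _ _ (by rw [neg_zero])]
  · have hσ2 := sigma_sq a hp ha hn hq hMilgram
    ext γ β
    rw [Matrix.mul_apply]
    set α : Fin n → ZMod p := γ + c⁻¹ • β with hα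
    have hB : ∀ δ : Fin n → ZMod p,
        Bm a γ δ + (-0 * Qm a δ + c⁻¹ * Bm a δ β - y * Qm a β)
          = Bm a δ α + (-y * Qm a β) := by
      intro δ
      rw [hα, Bm_add_right, Bm_smul_right, Bm_symm a γ δ]
      ring
    have step1 : ∀ δ : Fin n → ZMod p,
        MS p n a σ γ δ * MO p n a σ 0 c y δ β
          = (chi2 p c * σ ^ 2 / Rc p n ^ 2 * psi p (-y * Qm a β)) * psi p (Bm a δ α) := by
      intro δ
      have hps : psi p (Bm a γ δ) * psi p (-0 * Qm a δ + c⁻¹ * Bm a δ β - y * Qm a β)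
          = psi p (Bm a δ α) * psi p (-y * Qm a β) := by
        rw [← AddChar.map_add_eq_mul, hB δ, AddChar.map_add_eq_mul]
      calc MS p n a σ γ δ * MO p n a σ 0 c y δ β
          = (σ / Rc p n * psi p (Bm a γ δ))
            * (chi2 p c * σ / Rc p n
                * psi p (-0 * Qm a δ + c⁻¹ * Bm a δ β - y * Qm a β)) := by
            simp only [MS, MO, Matrix.of_apply]
        _ = chi2 p c * σ ^ 2 / Rc p n ^ 2
            * (psi p (Bm a γ δ)
                * psi p (-0 * Qm a δ + c⁻¹ * Bm a δ β - y * Qm a β)) := by ring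
        _ = chi2 p c * σ ^ 2 / Rc p n ^ 2 * (psi p (Bm a δ α) * psi p (-y * Qm a β)) := by
            rw [hps]
        _ = (chi2 p c * σ ^ 2 / Rc p n ^ 2 * psi p (-y * Qm a β)) * psi p (Bm a δ α) := by
            ring
    rw [Finset.sum_congr rfl fun δ _ => step1 δ, ← Finset.mul_sum]
    rw [sum_B a hp ha α]
    have hcond : (α = 0) ↔ (β = (-c) • γ) := by
      constructor
      · intro h
        have h2 : c • α = 0 := by rw [h, smul_zero]
        rw [hα, smul_add, smul_smul, mul_inv_cancel₀ hc, one_smul] at h2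
        have h3 : β = -(c • γ) := by
          have := eq_neg_of_add_eq_zero_right h2
          exact this
        rw [h3, ← neg_smul]
      · intro h
        rw [hα, h, smul_smul]
        rw [show c⁻¹ * -c = -1 by field_simp]
        rw [neg_one_smul, add_neg_cancel]
    show _ = chi2 p (-c) * psi p (-(y * c ^ 2) * Qm a γ) * (if β = (-c) • γ then 1 else 0)
    by_cases hb : β = (-c) • γ
    · rw [if_pos hb, if_pos (hcond.mpr hb), mul_one]
      have hQβ : Qm a β = c ^ 2 * Qm a γ := by
        rw [hb, Qm_smul, neg_pow]
        ring_nf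
      have hps2 : psi p (-y * Qm a β) = psi p (-(y * c ^ 2) * Qm a γ) := by
        rw [hQβ]
        congr 1
        ring
      have hRc2 : Rc p n ^ 2 = (p : ℂ) ^ n := Rc_sq
      have hchi : chi2 p c * σ ^ 2 = chi2 p (-c) := by
        rw [hσ2, ← chi2_mul]
        congr 1
        ring
      rw [hps2, hRc2]
      calc chi2 p c * σ ^ 2 / (p : ℂ) ^ n * psi p (-(y * c ^ 2) * Qm a γ) * (p : ℂ) ^ n
          = chi2 p c * σ ^ 2 * psi p (-(y * c ^ 2) * Qm a γ)
            * ((p : ℂ) ^ n / (p : ℂ) ^ n) := by ring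
        _ = chi2 p c * σ ^ 2 * psi p (-(y * c ^ 2) * Qm a γ) := by
            rw [div_self (pn_ne_zero (p := p) (n := n)), mul_one]
        _ = chi2 p (-c) * psi p (-(y * c ^ 2) * Qm a γ) := by rw [hchi]
    · rw [if_neg hb, if_neg (fun h => hb (hcond.mp h))]
      ring

lemma I5 (x c y : ZMod p) (hx : x ≠ 0) :
    MS p n a σ * MO p n a σ x c y
      = MO p n a σ (-x⁻¹) (x * c) (y - x⁻¹ * (c⁻¹) ^ 2) := by
  have hσ2 := sigma_sq a hp ha hn hq hMilgram
  ext γ β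
  rw [Matrix.mul_apply]
  set α : Fin n → ZMod p := γ + c⁻¹ • β with hα
  have hB : ∀ δ : Fin n → ZMod p,
      Bm a γ δ + (-x * Qm a δ + c⁻¹ * Bm a δ β - y * Qm a β)
        = ((-x) * Qm a δ + Bm a δ α) + (-y * Qm a β) := by
    intro δ
    rw [hα, Bm_add_right, Bm_smul_right, Bm_symm a γ δ]
    ring
  have step1 : ∀ δ : Fin n → ZMod p,
      MS p n a σ γ δ * MO p n a σ x c y δ β
        = (chi2 p c * σ ^ 2 / Rc p n ^ 2 * psi p (-y * Qm a β))
            * psi p ((-x) * Qm a δ + Bm a δ α) := by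
    intro δ
    show (σ / Rc p n * psi p (Bm a γ δ))
        * (chi2 p c * σ / Rc p n * psi p (-x * Qm a δ + c⁻¹ * Bm a δ β - y * Qm a β)) = _
    rw [show (σ / Rc p n * psi p (Bm a γ δ))
        * (chi2 p c * σ / Rc p n * psi p (-x * Qm a δ + c⁻¹ * Bm a δ β - y * Qm a β))
        = chi2 p c * σ ^ 2 / Rc p n ^ 2
          * (psi p (Bm a γ δ) * psi p (-x * Qm a δ + c⁻¹ * Bm a δ β - y * Qm a β)) by ring]
    rw [← AddChar.map_add_eq_mul, hB δ, AddChar.map_add_eq_mul]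
    ring
  rw [Finset.sum_congr rfl fun δ _ => step1 δ, ← Finset.mul_sum]
  rw [sum_wQB_sigma a hp ha hn hq hMilgram (-x) (neg_ne_zero.mpr hx) α]
  show _ = chi2 p (x * c) * σ / Rc p n
      * psi p (-(-x⁻¹) * Qm a γ + (x * c)⁻¹ * Bm a γ β - (y - x⁻¹ * (c⁻¹) ^ 2) * Qm a β)
  have hQα : Qm a α = Qm a γ + c⁻¹ * Bm a γ β + (c⁻¹) ^ 2 * Qm a β := by
    rw [hα, Qm_add, Bm_smul_right, Qm_smul]
  have hexp : -(-x)⁻¹ * Qm a α + (-y * Qm a β)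
      = -(-x⁻¹) * Qm a γ + (x * c)⁻¹ * Bm a γ β - (y - x⁻¹ * (c⁻¹) ^ 2) * Qm a β := by
    rw [hQα, inv_neg, mul_inv]
    ring
  have hψ : psi p (-(-x)⁻¹ * Qm a α) * psi p (-y * Qm a β)
      = psi p (-(-x⁻¹) * Qm a γ + (x * c)⁻¹ * Bm a γ β - (y - x⁻¹ * (c⁻¹) ^ 2) * Qm a β) := by
    rw [← AddChar.map_add_eq_mul, hexp]
  have hRc2 : Rc p n ^ 2 = (p : ℂ) ^ n := Rc_sq
  have hchi : chi2 p c * chi2 p (-x) * σ ^ 2 = chi2 p (x * c) := by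
    rw [hσ2, ← chi2_mul, ← chi2_mul]
    congr 1
    ring
  calc chi2 p c * σ ^ 2 / Rc p n ^ 2 * psi p (-y * Qm a β)
        * (psi p (-(-x)⁻¹ * Qm a α) * (chi2 p (-x) * (Rc p n * σ)))
      = (chi2 p c * chi2 p (-x) * σ ^ 2) * σ * (Rc p n / Rc p n ^ 2)
          * (psi p (-(-x)⁻¹ * Qm a α) * psi p (-y * Qm a β)) := by ring
    _ = chi2 p (x * c) * σ * (Rc p n / Rc p n ^ 2)
          * psi p (-(-x⁻¹) * Qm a γ + (x * c)⁻¹ * Bm a γ β - (y - x⁻¹ * (c⁻¹) ^ 2) * Qm a β) := by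
        rw [hchi, hψ]
    _ = _ := by
        have hRne : Rc p n ≠ 0 := Rc_ne_zero
        rw [show Rc p n / Rc p n ^ 2 = 1 / Rc p n by
          rw [pow_two]
          field_simp]
        ring

end HardIdentities

section Sums

variable (p : ℕ) [Fact p.Prime] (n : ℕ) (a : Fin n → ℤ) (σ : ℂ)

/-- Sum of the Borel-cell matrices. -/
noncomputable def SumA : Matrix (Fin n → ZMod p) (Fin n → ZMod p) ℂ :=
  ∑ t : ZMod p, ∑ u : ZMod p, MA p n a t u

/-- Sum of the big-cell matrices. -/
noncomputable def SumO : Matrix (Fin n → ZMod p) (Fin n → ZMod p) ℂ :=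
  ∑ x : ZMod p, ∑ c : ZMod p, ∑ y : ZMod p, MO p n a σ x c y

/-- The sum over the whole group. -/
noncomputable def Esum : Matrix (Fin n → ZMod p) (Fin n → ZMod p) ℂ :=
  SumA p n a + SumO p n a σ

lemma MT_mul_Esum : MT p n a * Esum p n a σ = Esum p n a σ := by
  rw [Esum, Matrix.mul_add]
  congr 1
  · rw [SumA, Matrix.mul_sum]
    refine Finset.sum_congr rfl fun t _ => ?_
    rw [Matrix.mul_sum]
    refine Fintype.sum_equiv (Equiv.addRight (1 : ZMod p)) _ _ fun u => ?_
    rw [I1]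
    rfl
  · rw [SumO, Matrix.mul_sum]
    refine Fintype.sum_equiv (Equiv.addRight (1 : ZMod p)) _ _ fun x => ?_
    rw [Matrix.mul_sum]
    refine Finset.sum_congr rfl fun c _ => ?_
    rw [Matrix.mul_sum]
    refine Finset.sum_congr rfl fun y _ => ?_
    rw [I2]
    rfl

variable {q : (Fin n → ZMod p) → ℚ}
variable (hp : p ≠ 2) (ha : ∀ i, ((a i : ZMod p)) ≠ 0) (hn : Odd n)
variable (hq : ∀ x, q x = ((∑ i, a i * ((x i).val : ℤ) ^ 2 : ℤ) : ℚ) / (p : ℚ))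
variable (hMilgram : ∑ γ : Fin n → ZMod p, e (q γ)
      = (Real.sqrt (Fintype.card (Fin n → ZMod p)) : ℂ) * σ)

include hp ha hn hq hMilgram

lemma MS_mul_SumA :
    MS p n a σ * SumA p n a = ∑ c : ZMod p, ∑ y : ZMod p, MO p n a σ 0 c y := by
  rw [SumA, Matrix.mul_sum]
  refine Finset.sum_congr rfl fun t _ => ?_
  rw [Matrix.mul_sum]
  by_cases ht : t = 0
  · subst ht
    refine Finset.sum_congr rfl fun u _ => ?_
    rw [MA_zero p n a 0 u rfl, Matrix.mul_zero, MO_zero p n a σ _ 0 _ rfl]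
  · have hbij : Function.Bijective (fun u : ZMod p => u * (t⁻¹) ^ 2) :=
      mul_left_injective₀ (pow_ne_zero 2 (inv_ne_zero ht)) |>.bijective_of_finite
    refine Fintype.sum_bijective _ hbij _ _ fun u => ?_
    rw [I3]

lemma MS_mul_SumO_zero :
    MS p n a σ * (∑ c : ZMod p, ∑ y : ZMod p, MO p n a σ 0 c y) = SumA p n a := by
  rw [Matrix.mul_sum, SumA]
  refine Fintype.sum_equiv (Equiv.neg (ZMod p)) _ _ fun c => ?_
  simp only [Equiv.neg_apply]
  rw [Matrix.mul_sum]
  by_cases hc : c = 0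
  · subst hc
    rw [neg_zero]
    refine Finset.sum_congr rfl fun y _ => ?_
    rw [MO_zero p n a σ _ 0 _ rfl, Matrix.mul_zero, MA_zero p n a 0 _ rfl]
  · have hbij : Function.Bijective (fun y : ZMod p => y * c ^ 2) :=
      mul_left_injective₀ (pow_ne_zero 2 hc) |>.bijective_of_finite
    exact Fintype.sum_bijective _ hbij
      (fun y => MS p n a σ * MO p n a σ 0 c y)
      (fun u => MA p n a (-c) u)
      (fun y => I4 hp ha hn hq hMilgram c y)

lemma MS_mul_SumO_rest :
    MS p n a σ * (∑ x ∈ Finset.univ.erase (0 : ZMod p), ∑ c : ZMod p, ∑ y : ZMod p,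
        MO p n a σ x c y)
      = ∑ x ∈ Finset.univ.erase (0 : ZMod p), ∑ c : ZMod p, ∑ y : ZMod p, MO p n a σ x c y := by
  classical
  have hconv : ∀ s : Finset (ZMod p),
      (∑ x ∈ s, ∑ c : ZMod p, ∑ y : ZMod p, MO p n a σ x c y)
        = ∑ z ∈ s ×ˢ (Finset.univ ×ˢ Finset.univ),
            MO p n a σ z.1 z.2.1 z.2.2 := by
    intro s
    rw [Finset.sum_product]
    refine Finset.sum_congr rfl fun x _ => ?_
    rw [Finset.sum_product]
  rw [hconv, Matrix.mul_sum]
  set s : Finset (ZMod p × ZMod p × ZMod p)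
    := (Finset.univ.erase (0 : ZMod p)) ×ˢ (Finset.univ ×ˢ Finset.univ) with hs
  have hmem : ∀ z : ZMod p × ZMod p × ZMod p, z ∈ s ↔ z.1 ≠ 0 := by
    intro z
    simp [hs, Finset.mem_product]
  refine Finset.sum_nbij'
    (i := fun z => (-z.1⁻¹, z.1 * z.2.1, z.2.2 - z.1⁻¹ * (z.2.1⁻¹) ^ 2))
    (j := fun z => (-z.1⁻¹, -z.1 * z.2.1, z.2.2 - z.1⁻¹ * (z.2.1⁻¹) ^ 2))
    ?_ ?_ ?_ ?_ ?_
  · intro z hz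
    rw [hmem] at hz ⊢
    exact neg_ne_zero.mpr (inv_ne_zero hz)
  · intro z hz
    rw [hmem] at hz ⊢
    exact neg_ne_zero.mpr (inv_ne_zero hz)
  · intro z hz
    rw [hmem] at hz
    obtain ⟨x, c, y⟩ := z
    simp only [Prod.mk.injEq]
    refine ⟨by rw [inv_neg, inv_inv, neg_neg], ?_, ?_⟩
    · show -(-x⁻¹) * (x * c) = c
      field_simp
    · show y - x⁻¹ * (c⁻¹) ^ 2 - (-x⁻¹)⁻¹ * ((x * c)⁻¹) ^ 2 = y
      rw [inv_neg, inv_inv, mul_inv]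
      by_cases hc : c = 0
      · subst hc; simp
      · field_simp
        ring
  · intro z hz
    rw [hmem] at hz
    obtain ⟨x, c, y⟩ := z
    simp only [Prod.mk.injEq]
    refine ⟨by rw [inv_neg, inv_inv, neg_neg], ?_, ?_⟩
    · show -x⁻¹ * (-x * c) = c
      field_simp
    · show y - x⁻¹ * (c⁻¹) ^ 2 - (-x⁻¹)⁻¹ * ((-x * c)⁻¹) ^ 2 = y
      rw [inv_neg, inv_inv, mul_inv, inv_neg]
      by_cases hc : c = 0
      · subst hc; simp
      · field_simp
        ring
  · intro z hz
    rw [hmem] at hz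
    obtain ⟨x, c, y⟩ := z
    exact I5 hp ha hn hq hMilgram x c y hz

lemma MS_mul_Esum : MS p n a σ * Esum p n a σ = Esum p n a σ := by
  have hsplit : SumO p n a σ
      = (∑ c : ZMod p, ∑ y : ZMod p, MO p n a σ 0 c y)
        + ∑ x ∈ Finset.univ.erase (0 : ZMod p), ∑ c : ZMod p, ∑ y : ZMod p,
            MO p n a σ x c y := by
    rw [SumO, ← Finset.add_sum_erase _ _ (Finset.mem_univ (0 : ZMod p))]
  rw [Esum, Matrix.mul_add, hsplit, Matrix.mul_add]
  rw [MS_mul_SumA p n a σ hp ha hn hq hMilgram,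
    MS_mul_SumO_zero p n a σ hp ha hn hq hMilgram,
    MS_mul_SumO_rest p n a σ hp ha hn hq hMilgram]
  abel

end Sums

section Fixes

variable {p : ℕ} [Fact p.Prime] {n : ℕ} {a : Fin n → ℤ} {σ : ℂ}
variable {q : (Fin n → ZMod p) → ℚ}
variable (hp : p ≠ 2) (ha : ∀ i, ((a i : ZMod p)) ≠ 0) (hn : Odd n)
variable (hq : ∀ x, q x = ((∑ i, a i * ((x i).val : ℤ) ^ 2 : ℤ) : ℚ) / (p : ℚ))
variable (hMilgram : ∑ γ : Fin n → ZMod p, e (q γ)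
      = (Real.sqrt (Fintype.card (Fin n → ZMod p)) : ℂ) * σ)
variable {f : (Fin n → ZMod p) → ℂ}
variable (hfT : Matrix.toLin' (MT p n a) f = f) (hfS : Matrix.toLin' (MS p n a σ) f = f)

lemma MA_one_zero : MA p n a 1 0 = 1 := by
  ext γ β
  show chi2 p 1 * psi p (-0 * Qm a γ) * (if β = (1 : ZMod p) • γ then 1 else 0) = _
  rw [map_one, one_smul, Matrix.one_apply]
  rw [show (-0 : ZMod p) * Qm a γ = 0 by ring, AddChar.map_zero_eq_one, one_mul, one_mul]
  by_cases h : γ = β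
  · rw [if_pos h.symm, if_pos h]
  · rw [if_neg (fun hh => h hh.symm), if_neg h]

include hfT in
lemma fixT_mul (M : Matrix (Fin n → ZMod p) (Fin n → ZMod p) ℂ)
    (h : Matrix.toLin' M f = f) : Matrix.toLin' (MT p n a * M) f = f := by
  rw [Matrix.toLin'_mul, LinearMap.comp_apply, h, hfT]

include hfS in
lemma fixS_mul (M : Matrix (Fin n → ZMod p) (Fin n → ZMod p) ℂ)
    (h : Matrix.toLin' M f = f) : Matrix.toLin' (MS p n a σ * M) f = f := by
  rw [Matrix.toLin'_mul, LinearMap.comp_apply, h, hfS]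

include hfT in
lemma fixA_one (u : ZMod p) : Matrix.toLin' (MA p n a 1 u) f = f := by
  suffices h : ∀ m : ℕ, Matrix.toLin' (MA p n a 1 ((m : ℕ) : ZMod p)) f = f by
    have := h u.val
    rwa [ZMod.natCast_rightInverse u] at this
  intro m
  induction m with
  | zero =>
    rw [Nat.cast_zero, MA_one_zero, Matrix.toLin'_one, LinearMap.id_apply]
  | succ k ih =>
    rw [Nat.cast_add, Nat.cast_one, ← I1]
    exact fixT_mul hfT _ ih

include hfT in
lemma fixO_shift (x c y : ZMod p) (m : ℕ)
    (h : Matrix.toLin' (MO p n a σ x c y) f = f) :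
    Matrix.toLin' (MO p n a σ (x + (m : ZMod p)) c y) f = f := by
  induction m with
  | zero => rwa [Nat.cast_zero, add_zero]
  | succ k ih =>
    rw [Nat.cast_add, Nat.cast_one, ← add_assoc, ← I2]
    exact fixT_mul hfT _ ih

include hfT hfS in
lemma fixO_one (x y : ZMod p) : Matrix.toLin' (MO p n a σ x 1 y) f = f := by
  have h0 : Matrix.toLin' (MO p n a σ 0 1 y) f = f := by
    have hI3 := I3 p n a σ 1 y
    rw [inv_one, one_pow, mul_one] at hI3
    rw [← hI3]
    exact fixS_mul hfS _ (fixA_one hfT y)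
  have := fixO_shift hfT 0 1 y x.val h0
  rwa [ZMod.natCast_rightInverse x, zero_add] at this

include hp ha hn hq hMilgram hfT hfS in
lemma fixO_gen (x c y : ZMod p) (hc : c ≠ 0) :
    Matrix.toLin' (MO p n a σ x c y) f = f := by
  have h1 : Matrix.toLin' (MO p n a σ c 1 (y + c⁻¹)) f = f := fixO_one hfT hfS c (y + c⁻¹)
  have h2 : MS p n a σ * MO p n a σ c 1 (y + c⁻¹) = MO p n a σ (-c⁻¹) c y := by
    have := I5 hp ha hn hq hMilgram c 1 (y + c⁻¹) hc
    rw [inv_one, one_pow, mul_one, mul_one, add_sub_cancel_right] at this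
    exact this
  have h3 : Matrix.toLin' (MO p n a σ (-c⁻¹) c y) f = f := by
    rw [← h2]
    exact fixS_mul hfS _ h1
  have h4 := fixO_shift hfT (-c⁻¹) c y (x + c⁻¹).val h3
  rw [ZMod.natCast_rightInverse (x + c⁻¹)] at h4
  rwa [show -c⁻¹ + (x + c⁻¹) = x by ring] at h4

include hp ha hn hq hMilgram hfT hfS in
lemma fixA_gen (t u : ZMod p) (ht : t ≠ 0) :
    Matrix.toLin' (MA p n a t u) f = f := by
  have hnt : (-t : ZMod p) ≠ 0 := neg_ne_zero.mpr ht
  have hy : u * (((-t) ^ 2)⁻¹) * (-t) ^ 2 = u :=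
    inv_mul_cancel_right₀ (pow_ne_zero 2 hnt) u
  have h1 : Matrix.toLin' (MO p n a σ 0 (-t) (u * ((-t) ^ 2)⁻¹)) f = f :=
    fixO_gen hp ha hn hq hMilgram hfT hfS 0 (-t) _ hnt
  have h2 : MS p n a σ * MO p n a σ 0 (-t) (u * ((-t) ^ 2)⁻¹) = MA p n a t u := by
    rw [I4 hp ha hn hq hMilgram, neg_neg, hy]
  rw [← h2]
  exact fixS_mul hfS _ h1

include hp ha hn hq hMilgram hfT hfS in
lemma Esum_fix :
    Matrix.toLin' (Esum p n a σ) f = ((((p : ℂ) - 1) * p) * ((p : ℂ) + 1)) • f := by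
  have hcast : ((p - 1 : ℕ) : ℂ) = (p : ℂ) - 1 := by
    have h1 : (1 : ℕ) ≤ p := (Fact.out : p.Prime).one_lt.le
    push_cast [Nat.cast_sub h1]
    ring
  have erase_card : (Finset.univ.erase (0 : ZMod p)).card = p - 1 := by
    rw [Finset.card_erase_of_mem (Finset.mem_univ 0), Finset.card_univ, ZMod.card]
  have hA : Matrix.toLin' (SumA p n a) f = (((p : ℂ) - 1) * p) • f := by
    rw [SumA, map_sum, LinearMap.sum_apply]
    have hinner : ∀ t : ZMod p,
        Matrix.toLin' (∑ u : ZMod p, MA p n a t u) f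
          = if t = 0 then 0 else ((p : ℂ)) • f := by
      intro t
      rw [map_sum, LinearMap.sum_apply]
      by_cases ht : t = 0
      · rw [if_pos ht]
        subst ht
        refine Finset.sum_eq_zero fun u _ => ?_
        rw [MA_zero p n a 0 u rfl]
        simp
      · rw [if_neg ht]
        rw [Finset.sum_congr rfl fun u _ => fixA_gen hp ha hn hq hMilgram hfT hfS t u ht]
        rw [Finset.sum_const, Finset.card_univ, ZMod.card]
        rw [← Nat.cast_smul_eq_nsmul ℂ]
    rw [Finset.sum_congr rfl fun t _ => hinner t]
    rw [← Finset.add_sum_erase _ _ (Finset.mem_univ (0 : ZMod p)), if_pos rfl, zero_add]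
    rw [Finset.sum_congr rfl fun t htmem => if_neg (Finset.mem_erase.mp htmem).1]
    rw [Finset.sum_const, erase_card, ← Nat.cast_smul_eq_nsmul ℂ, smul_smul, hcast]
  have hO : Matrix.toLin' (SumO p n a σ) f = ((((p : ℂ) - 1) * p) * p) • f := by
    rw [SumO, map_sum, LinearMap.sum_apply]
    have hinner : ∀ x : ZMod p,
        Matrix.toLin' (∑ c : ZMod p, ∑ y : ZMod p, MO p n a σ x c y) f
          = (((p : ℂ) - 1) * p) • f := by
      intro x
      rw [map_sum, LinearMap.sum_apply]
      have hinner2 : ∀ c : ZMod p,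
          Matrix.toLin' (∑ y : ZMod p, MO p n a σ x c y) f
            = if c = 0 then 0 else ((p : ℂ)) • f := by
        intro c
        rw [map_sum, LinearMap.sum_apply]
        by_cases hc : c = 0
        · rw [if_pos hc]
          subst hc
          refine Finset.sum_eq_zero fun y _ => ?_
          rw [MO_zero p n a σ x 0 y rfl]
          simp
        · rw [if_neg hc]
          rw [Finset.sum_congr rfl fun y _ =>
            fixO_gen hp ha hn hq hMilgram hfT hfS x c y hc]
          rw [Finset.sum_const, Finset.card_univ, ZMod.card]
          rw [← Nat.cast_smul_eq_nsmul ℂ]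
      rw [Finset.sum_congr rfl fun c _ => hinner2 c]
      rw [← Finset.add_sum_erase _ _ (Finset.mem_univ (0 : ZMod p)), if_pos rfl, zero_add]
      rw [Finset.sum_congr rfl fun c hcmem => if_neg (Finset.mem_erase.mp hcmem).1]
      rw [Finset.sum_const, erase_card, ← Nat.cast_smul_eq_nsmul ℂ, smul_smul, hcast]
    rw [Finset.sum_congr rfl fun x _ => hinner x]
    rw [Finset.sum_const, Finset.card_univ, ZMod.card, ← Nat.cast_smul_eq_nsmul ℂ, smul_smul]
    congr 1
    ring
  rw [Esum, map_add, LinearMap.add_apply, hA, hO, ← add_smul]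
  congr 1
  ring

end Fixes

section Traces

variable {p : ℕ} [Fact p.Prime] {n : ℕ} {a : Fin n → ℤ} {σ : ℂ}
variable {q : (Fin n → ZMod p) → ℚ}
variable (hp : p ≠ 2) (ha : ∀ i, ((a i : ZMod p)) ≠ 0) (hn : Odd n)
variable (hq : ∀ x, q x = ((∑ i, a i * ((x i).val : ℤ) ^ 2 : ℤ) : ℚ) / (p : ℚ))
variable (hMilgram : ∑ γ : Fin n → ZMod p, e (q γ)
      = (Real.sqrt (Fintype.card (Fin n → ZMod p)) : ℂ) * σ)

lemma trace_MA_ne_one (t u : ZMod p) (ht : t ≠ 1) :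
    (MA p n a t u).trace = chi2 p t := by
  have hdiag : ∀ γ : Fin n → ZMod p,
      MA p n a t u γ γ = chi2 p t * psi p (-u * Qm a γ) * (if γ = t • γ then 1 else 0) := by
    intro γ; rfl
  rw [Matrix.trace]
  simp only [Matrix.diag]
  rw [Finset.sum_eq_single 0]
  · rw [hdiag 0, if_pos (by rw [smul_zero]), Qm_zero, mul_zero,
      AddChar.map_zero_eq_one, mul_one, mul_one]
  · intro γ _ hγ
    rw [hdiag γ]
    have hne : ¬(γ = t • γ) := by
      intro hcon
      apply hγ
      funext i
      have h1 : γ i = t * γ i := congrFun hcon i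
      have h2 : (t - 1) * γ i = 0 := by rw [sub_mul, one_mul, ← h1, sub_self]
      rcases mul_eq_zero.mp h2 with h' | h'
      · exact absurd (by linear_combination h' : t = 1) ht
      · exact h'
    rw [if_neg hne, mul_zero]
  · intro h; exact absurd (Finset.mem_univ _) h

include hp ha hn hq hMilgram in
lemma trace_MA_one (u : ZMod p) :
    (MA p n a 1 u).trace
      = if u = 0 then ((p : ℂ)) ^ n else chi2 p (-u) * (Rc p n * σ) := by
  have hdiag : ∀ γ : Fin n → ZMod p,
      MA p n a 1 u γ γ = chi2 p 1 * psi p (-u * Qm a γ) * (if γ = (1 : ZMod p) • γ then 1 else 0) := by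
    intro γ; rfl
  rw [Matrix.trace]
  simp only [Matrix.diag]
  have hsum : ∑ γ : Fin n → ZMod p, MA p n a 1 u γ γ
      = ∑ γ : Fin n → ZMod p, psi p (-u * Qm a γ) := by
    refine Finset.sum_congr rfl fun γ _ => ?_
    rw [hdiag γ, if_pos (by rw [one_smul]), map_one, one_mul, mul_one]
  rw [hsum]
  by_cases hu : u = 0
  · subst hu
    rw [if_pos rfl]
    have : ∀ γ : Fin n → ZMod p, psi p (-(0 : ZMod p) * Qm a γ) = 1 := by
      intro γ
      rw [show -(0 : ZMod p) * Qm a γ = 0 by ring, AddChar.map_zero_eq_one]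
    rw [Finset.sum_congr rfl fun γ _ => this γ, Finset.sum_const, Finset.card_univ, card_V,
      nsmul_eq_mul, mul_one]
    push_cast
    rfl
  · rw [if_neg hu]
    exact sum_wQ_sigma a hp ha hn hq hMilgram (-u) (neg_ne_zero.mpr hu)

include hp ha hn hq hMilgram in
lemma trace_SumA : (SumA p n a).trace = ((p : ℂ)) ^ n - p := by
  rw [SumA, Matrix.trace_sum]
  have hinner : ∀ t : ZMod p, (∑ u : ZMod p, MA p n a t u).trace
      = if t = 1 then ((p : ℂ)) ^ n else (p : ℂ) * chi2 p t := by
    intro t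
    rw [Matrix.trace_sum]
    by_cases ht : t = 1
    · subst ht
      rw [if_pos rfl]
      rw [Finset.sum_congr rfl fun u _ => trace_MA_one hp ha hn hq hMilgram u]
      rw [← Finset.add_sum_erase _ _ (Finset.mem_univ (0 : ZMod p)), if_pos rfl]
      have hrest : ∑ u ∈ Finset.univ.erase (0 : ZMod p),
          (if u = 0 then ((p : ℂ)) ^ n else chi2 p (-u) * (Rc p n * σ))
            = ∑ u ∈ Finset.univ.erase (0 : ZMod p), chi2 p (-u) * (Rc p n * σ) :=
        Finset.sum_congr rfl fun u hu => if_neg (Finset.mem_erase.mp hu).1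
      rw [hrest, ← Finset.sum_mul]
      have hchisum : ∑ u ∈ Finset.univ.erase (0 : ZMod p), chi2 p (-u) = 0 := by
        have h1 : ∑ u : ZMod p, chi2 p (-u) = 0 := by
          rw [← chi2_sum_zero p hp]
          exact Fintype.sum_equiv (Equiv.neg (ZMod p)) _ _ fun u => by
            simp only [Equiv.neg_apply]
        have h2 : ∑ u : ZMod p, chi2 p (-u)
            = chi2 p (-0) + ∑ u ∈ Finset.univ.erase (0 : ZMod p), chi2 p (-u) :=
          (Finset.add_sum_erase _ _ (Finset.mem_univ (0 : ZMod p))).symm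
        rw [h1] at h2
        rw [show chi2 p (-(0 : ZMod p)) = 0 by rw [neg_zero, chi2_zero], zero_add] at h2
        exact h2.symm
      rw [hchisum, zero_mul, add_zero]
    · rw [if_neg ht]
      rw [Finset.sum_congr rfl fun u _ => trace_MA_ne_one t u ht]
      rw [Finset.sum_const, Finset.card_univ, ZMod.card, nsmul_eq_mul]
  rw [Finset.sum_congr rfl fun t _ => hinner t]
  rw [← Finset.add_sum_erase _ _ (Finset.mem_univ (1 : ZMod p)), if_pos rfl]
  have hrest : ∑ t ∈ Finset.univ.erase (1 : ZMod p),
      (if t = 1 then ((p : ℂ)) ^ n else (p : ℂ) * chi2 p t)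
        = ∑ t ∈ Finset.univ.erase (1 : ZMod p), (p : ℂ) * chi2 p t :=
    Finset.sum_congr rfl fun t htm => if_neg (Finset.mem_erase.mp htm).1
  rw [hrest, ← Finset.mul_sum]
  have hchie : ∑ t ∈ Finset.univ.erase (1 : ZMod p), chi2 p t = -1 := by
    have h1 := chi2_sum_zero p hp
    have h2 : ∑ t : ZMod p, chi2 p t
        = chi2 p 1 + ∑ t ∈ Finset.univ.erase (1 : ZMod p), chi2 p t :=
      (Finset.add_sum_erase _ _ (Finset.mem_univ (1 : ZMod p))).symm
    rw [h1, map_one] at h2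
    linear_combination (-1 : ℂ) * h2
  rw [hchie]
  ring

end Traces

section Traces2

variable {p : ℕ} [Fact p.Prime] {n : ℕ} {a : Fin n → ℤ} {σ : ℂ}
variable {q : (Fin n → ZMod p) → ℚ}
variable (hp : p ≠ 2) (ha : ∀ i, ((a i : ZMod p)) ≠ 0) (hn : Odd n)
variable (hq : ∀ x, q x = ((∑ i, a i * ((x i).val : ℤ) ^ 2 : ℤ) : ℚ) / (p : ℚ))
variable (hMilgram : ∑ γ : Fin n → ZMod p, e (q γ)
      = (Real.sqrt (Fintype.card (Fin n → ZMod p)) : ℂ) * σ)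

include hp in
lemma chi2_erase_zero : ∑ s ∈ Finset.univ.erase (0 : ZMod p), chi2 p s = 0 := by
  have h2 : ∑ s : ZMod p, chi2 p s
      = chi2 p 0 + ∑ s ∈ Finset.univ.erase (0 : ZMod p), chi2 p s :=
    (Finset.add_sum_erase _ _ (Finset.mem_univ (0 : ZMod p))).symm
  rw [chi2_sum_zero p hp, chi2_zero, zero_add] at h2
  exact h2.symm

include hp ha hn hq hMilgram in
lemma trace_MO_ne (x c y : ZMod p) (hc : c ≠ 0) :
    (MO p n a σ x c y).trace
      = chi2 p c * σ / Rc p n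
        * (if (c⁻¹ * 2 - x - y) = 0 then ((p : ℂ)) ^ n
            else chi2 p (c⁻¹ * 2 - x - y) * (Rc p n * σ)) := by
  rw [Matrix.trace]
  simp only [Matrix.diag]
  have hdiag : ∀ γ : Fin n → ZMod p,
      MO p n a σ x c y γ γ
        = chi2 p c * σ / Rc p n * psi p ((c⁻¹ * 2 - x - y) * Qm a γ) := by
    intro γ
    show chi2 p c * σ / Rc p n * psi p (-x * Qm a γ + c⁻¹ * Bm a γ γ - y * Qm a γ) = _
    rw [Bm_self]
    rw [show -x * Qm a γ + c⁻¹ * (2 * Qm a γ) - y * Qm a γ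
        = (c⁻¹ * 2 - x - y) * Qm a γ by ring]
  rw [Finset.sum_congr rfl fun γ _ => hdiag γ, ← Finset.mul_sum]
  by_cases hs : (c⁻¹ * 2 - x - y) = 0
  · rw [if_pos hs]
    congr 1
    have h1 : ∀ γ : Fin n → ZMod p, psi p ((c⁻¹ * 2 - x - y) * Qm a γ) = 1 := by
      intro γ
      rw [hs, zero_mul, AddChar.map_zero_eq_one]
    rw [Finset.sum_congr rfl fun γ _ => h1 γ, Finset.sum_const, Finset.card_univ, card_V,
      nsmul_eq_mul, mul_one]
    push_cast
    rfl
  · rw [if_neg hs]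
    congr 1
    exact sum_wQ_sigma a hp ha hn hq hMilgram _ hs

include hp ha hn hq hMilgram in
lemma trace_SumO : (SumO p n a σ).trace = 0 := by
  rw [SumO, Matrix.trace_sum]
  have hinner : ∀ x : ZMod p,
      (∑ c : ZMod p, ∑ y : ZMod p, MO p n a σ x c y).trace = 0 := by
    intro x
    rw [Matrix.trace_sum]
    have hinner2 : ∀ c : ZMod p,
        (∑ y : ZMod p, MO p n a σ x c y).trace
          = chi2 p c * (σ / Rc p n * ((p : ℂ)) ^ n) := by
      intro c
      rw [Matrix.trace_sum]
      by_cases hc : c = 0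
      · subst hc
        rw [chi2_zero, zero_mul]
        refine Finset.sum_eq_zero fun y _ => ?_
        rw [MO_zero p n a σ x 0 y rfl, Matrix.trace_zero]
      · have hre : ∑ y : ZMod p, (MO p n a σ x c y).trace
            = ∑ s : ZMod p, (chi2 p c * σ / Rc p n
              * (if s = 0 then ((p : ℂ)) ^ n else chi2 p s * (Rc p n * σ))) := by
          refine Fintype.sum_equiv (Equiv.subLeft (c⁻¹ * 2 - x)) _ _ fun y => ?_
          simp only [Equiv.subLeft_apply]
          rw [trace_MO_ne hp ha hn hq hMilgram x c y hc]
        rw [hre, ← Finset.add_sum_erase _ _ (Finset.mem_univ (0 : ZMod p)), if_pos rfl]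
        have hrest : ∑ s ∈ Finset.univ.erase (0 : ZMod p),
            (chi2 p c * σ / Rc p n
              * (if s = 0 then ((p : ℂ)) ^ n else chi2 p s * (Rc p n * σ)))
            = ∑ s ∈ Finset.univ.erase (0 : ZMod p),
                (chi2 p c * σ / Rc p n * (Rc p n * σ)) * chi2 p s := by
          refine Finset.sum_congr rfl fun s hs => ?_
          rw [if_neg (Finset.mem_erase.mp hs).1]
          ring
        rw [hrest, ← Finset.mul_sum, chi2_erase_zero hp, mul_zero, add_zero]
        ring
    rw [Finset.sum_congr rfl fun c _ => hinner2 c, ← Finset.sum_mul,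
      chi2_sum_zero p hp, zero_mul]
  rw [Finset.sum_congr rfl fun x _ => hinner x, Finset.sum_const, smul_zero]

include hp ha hn hq hMilgram in
lemma trace_Esum : (Esum p n a σ).trace = ((p : ℂ)) ^ n - p := by
  rw [Esum, Matrix.trace_add, trace_SumA hp ha hn hq hMilgram,
    trace_SumO hp ha hn hq hMilgram, add_zero]

end Traces2

/-- dimension of the space of Weil invariants for a discriminant form of
type `p^{εn}` (`p` an odd prime, `n` odd, `q(x) = (∑ aᵢxᵢ²)/p`). -/
theorem dim_weil_invariants_odd_prime_odd_rank
    (p : ℕ) [Fact p.Prime] (hp : p ≠ 2) (n : ℕ) (hn : Odd n)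
    (a : Fin n → ℤ) (ha : ∀ i, ¬ (p : ℤ) ∣ a i)
    (q : (Fin n → ZMod p) → ℚ)
    (hq : ∀ x, q x = ((∑ i, a i * ((x i).val : ℤ) ^ 2 : ℤ) : ℚ) / (p : ℚ))
    (σ : ℂ)
    (hMilgram : ∑ γ : Fin n → ZMod p, e (q γ)
      = (Real.sqrt (Fintype.card (Fin n → ZMod p)) : ℂ) * σ) :
    (Module.finrank ℂ ↥(weilInvariants (Fin n → ZMod p) q σ) : ℚ)
      = ((p : ℚ) ^ (n - 1) - 1) / ((p : ℚ) ^ 2 - 1) := by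
  classical
  have hple : 2 ≤ p := (Fact.out : p.Prime).two_le
  have ha' : ∀ i, ((a i : ZMod p)) ≠ 0 := fun i h =>
    ha i ((ZMod.intCast_zmod_eq_zero_iff_dvd _ p).mp h)
  set W := weilInvariants (Fin n → ZMod p) q σ with hW
  have hmem : ∀ f : (Fin n → ZMod p) → ℂ,
      f ∈ W ↔ (rhoT (Fin n → ZMod p) q f = f ∧ rhoS (Fin n → ZMod p) q σ f = f) := by
    intro f
    rw [hW, weilInvariants, Submodule.mem_inf, LinearMap.mem_ker, LinearMap.mem_ker,
      LinearMap.sub_apply, LinearMap.sub_apply, LinearMap.id_apply, sub_eq_zero, sub_eq_zero]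
  set NN : ℂ := ((p : ℂ) - 1) * (p : ℂ) * ((p : ℂ) + 1) with hNN
  have hp0 : (p : ℂ) ≠ 0 := by
    exact_mod_cast fun h => (Fact.out : p.Prime).ne_zero (by exact_mod_cast h)
  have hp1 : (p : ℂ) - 1 ≠ 0 := by
    rw [sub_ne_zero]
    intro h
    have : p = 1 := by exact_mod_cast h
    omega
  have hp2 : (p : ℂ) + 1 ≠ 0 := by
    intro h
    have h2 : ((p + 1 : ℕ) : ℂ) = 0 := by push_cast; rw [← h]
    have : p + 1 = 0 := by exact_mod_cast h2
    omega
  have hNN0 : NN ≠ 0 := mul_ne_zero (mul_ne_zero hp1 hp0) hp2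
  set Eop : ((Fin n → ZMod p) → ℂ) →ₗ[ℂ] ((Fin n → ZMod p) → ℂ)
    := NN⁻¹ • Matrix.toLin' (Esum p n a σ) with hEop
  have hfixW : ∀ f ∈ W, Eop f = f := by
    intro f hf
    obtain ⟨hT, hS⟩ := (hmem f).mp hf
    have hfT : Matrix.toLin' (MT p n a) f = f := by rw [toLin_MT p n a hq]; exact hT
    have hfS : Matrix.toLin' (MS p n a σ) f = f := by rw [toLin_MS p n a σ hq]; exact hS
    rw [hEop, LinearMap.smul_apply, Esum_fix hp ha' hn hq hMilgram hfT hfS,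
      smul_smul, inv_mul_cancel₀ hNN0, one_smul]
  have hrange : ∀ f, Eop f ∈ W := by
    intro f
    refine (hmem _).mpr ⟨?_, ?_⟩
    · rw [← toLin_MT p n a hq, hEop, LinearMap.smul_apply, map_smul]
      congr 1
      rw [← LinearMap.comp_apply, ← Matrix.toLin'_mul, MT_mul_Esum]
    · rw [← toLin_MS p n a σ hq, hEop, LinearMap.smul_apply, map_smul]
      congr 1
      rw [← LinearMap.comp_apply, ← Matrix.toLin'_mul,
        MS_mul_Esum p n a σ hp ha' hn hq hMilgram]
  set π : ((Fin n → ZMod p) → ℂ) →ₗ[ℂ] W := LinearMap.codRestrict W Eop hrange with hπ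
  set ι : W →ₗ[ℂ] ((Fin n → ZMod p) → ℂ) := W.subtype with hι
  have hEop_eq : Eop = ι.comp π := by
    refine LinearMap.ext fun f => ?_
    rfl
  have hπι : π.comp ι = LinearMap.id := by
    refine LinearMap.ext fun g => ?_
    exact Subtype.ext (hfixW g g.2)
  have htrace : LinearMap.trace ℂ _ Eop = (Module.finrank ℂ W : ℂ) := by
    rw [hEop_eq, LinearMap.trace_comp_comm' π ι, hπι, LinearMap.trace_id]
  have htrace2 : LinearMap.trace ℂ _ Eop = NN⁻¹ * (((p : ℂ)) ^ n - p) := by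
    rw [hEop, map_smul, smul_eq_mul]
    congr 1
    rw [LinearMap.trace_eq_matrix_trace ℂ (Pi.basisFun ℂ (Fin n → ZMod p)),
      LinearMap.toMatrix_eq_toMatrix', LinearMap.toMatrix'_toLin']
    exact trace_Esum hp ha' hn hq hMilgram
  have hfr : (Module.finrank ℂ W : ℂ) = NN⁻¹ * (((p : ℂ)) ^ n - p) := by
    rw [← htrace, htrace2]
  have hn1 : n - 1 + 1 = n := Nat.succ_pred_eq_of_pos hn.pos
  have hpow : ((p : ℂ)) ^ n = ((p : ℂ)) ^ (n - 1) * p := by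
    conv_lhs => rw [← hn1]
    rw [pow_succ]
  have hsq : ((p : ℂ)) ^ 2 - 1 = ((p : ℂ) - 1) * ((p : ℂ) + 1) := by ring
  have hsq0 : ((p : ℂ)) ^ 2 - 1 ≠ 0 := by rw [hsq]; exact mul_ne_zero hp1 hp2
  have key : ((((p : ℚ) ^ (n - 1) - 1) / ((p : ℚ) ^ 2 - 1) : ℚ) : ℂ)
      = NN⁻¹ * (((p : ℂ)) ^ n - p) := by
    push_cast
    rw [hpow, hNN]
    field_simp
    ring
  have hfinal : (Module.finrank ℂ W : ℂ)
      = ((((p : ℚ) ^ (n - 1) - 1) / ((p : ℚ) ^ 2 - 1) : ℚ) : ℂ) := by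
    rw [hfr, key]
  have hcast : ((Module.finrank ℂ W : ℚ) : ℂ) = (Module.finrank ℂ W : ℂ) := by
    push_cast
    rfl
  rw [← hcast] at hfinal
  exact_mod_cast hfinal
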